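/- Let a < b be real numbers and let f : ℝ → ℝ be twice continuously differentiable on [a, b] with |f''(x)| ≤ K for all x ∈ [a, b]. Then for every natural number L ≥ 1, with partition points x_i = a + i·(b−a)/L for i = 0,…,L, the discrepancy between the total increment sum and the integral of |f'| satisfies |Σ_{i=1}^{L} |f(x_i) − f(x_{i−1})| − ∫_a^b |f'(x)| dx| ≤ 2K·(b−a)^2/L. -/

import Mathlib

open Set intervalIntegral

/-- Per-interval estimate: if `f' = g` on the interior, `g` is `K`-Lipschitz on `[a,b]`,
then on any subinterval `[c,d]` the increment `|f d - f c|` is within `2K(d-c)^2`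
of `∫_c^d |g|`. -/
lemma per_interval_est (a b : ℝ) (f g : ℝ → ℝ) (K : ℝ)
    (hK0 : 0 ≤ K)
    (hgc : ContinuousOn g (Set.Icc a b))
    (hfc : ContinuousOn f (Set.Icc a b))
    (hder : ∀ x ∈ Set.Ioo a b, HasDerivAt f (g x) x)
    (hlip : ∀ x ∈ Set.Icc a b, ∀ y ∈ Set.Icc a b, |g y - g x| ≤ K * |y - x|)
    (c d : ℝ) (hc : a ≤ c) (hcd : c ≤ d) (hd : d ≤ b) :
    |f d - f c| ≤ (∫ x in c..d, |g x|) ∧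
      (∫ x in c..d, |g x|) ≤ |f d - f c| + 2 * K * (d - c) ^ 2 := by
  have hsub : Set.Icc c d ⊆ Set.Icc a b := Set.Icc_subset_Icc hc hd
  have hgc' : ContinuousOn g (Set.Icc c d) := hgc.mono hsub
  have hgint : IntervalIntegrable g MeasureTheory.volume c d :=
    (hgc'.intervalIntegrable_of_Icc hcd)
  have hgaint : IntervalIntegrable (fun x => |g x|) MeasureTheory.volume c d :=
    ((hgc'.abs).intervalIntegrable_of_Icc hcd)
  have hftc : (∫ x in c..d, g x) = f d - f c := by
    apply integral_eq_sub_of_hasDerivAt_of_le hcd (hfc.mono hsub) _ hgint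
    intro x hx
    exact hder x ⟨lt_of_le_of_lt hc hx.1, lt_of_lt_of_le hx.2 hd⟩
  have hcmem : c ∈ Set.Icc a b := ⟨hc, le_trans hcd hd⟩
  have hub : ∀ x ∈ Set.Icc c d, |g x| ≤ |g c| + K * (d - c) := by
    intro x hx
    have h1 : |g x - g c| ≤ K * |x - c| := hlip c hcmem x (hsub hx)
    have h2 : |x - c| ≤ d - c := by
      rw [abs_of_nonneg (by linarith [hx.1])]; linarith [hx.2]
    have h3 : |g x| ≤ |g c| + |g x - g c| := by
      calc |g x| = |g c + (g x - g c)| := by ring_nf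
        _ ≤ |g c| + |g x - g c| := abs_add_le _ _
    nlinarith [abs_nonneg (g x - g c)]
  constructor
  · rw [← hftc]
    exact abs_integral_le_integral_abs hcd
  · have hupper : (∫ x in c..d, |g x|) ≤ (d - c) * (|g c| + K * (d - c)) := by
      calc (∫ x in c..d, |g x|) ≤ ∫ _x in c..d, (|g c| + K * (d - c)) := by
            apply intervalIntegral.integral_mono_on hcd hgaint intervalIntegrable_const hub
        _ = (d - c) * (|g c| + K * (d - c)) := by
            rw [intervalIntegral.integral_const, smul_eq_mul]
    have herr : |(∫ x in c..d, g x) - (d - c) * g c| ≤ K * (d - c) ^ 2 := by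
      have heq : (∫ x in c..d, (g x - g c)) = (∫ x in c..d, g x) - (d - c) * g c := by
        rw [intervalIntegral.integral_sub hgint intervalIntegrable_const,
          intervalIntegral.integral_const, smul_eq_mul]
      rw [← heq]
      have hb : ∀ x ∈ Set.uIoc c d, |g x - g c| ≤ K * (d - c) := by
        intro x hx
        rw [Set.uIoc_of_le hcd] at hx
        have h1 : |g x - g c| ≤ K * |x - c| := hlip c hcmem x (hsub ⟨le_of_lt hx.1, hx.2⟩)
        have h2 : |x - c| ≤ d - c := by
          rw [abs_of_nonneg (by linarith [hx.1.le])]; linarith [hx.2]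
        nlinarith [abs_nonneg (x - c)]
      have h4 : ‖∫ x in c..d, (g x - g c)‖ ≤ K * (d - c) * |d - c| :=
        intervalIntegral.norm_integral_le_of_norm_le_const (by simpa using hb)
      rw [Real.norm_eq_abs] at h4
      calc |∫ x in c..d, (g x - g c)| ≤ K * (d - c) * |d - c| := h4
        _ = K * (d - c) ^ 2 := by rw [abs_of_nonneg (by linarith)]; ring
    have hlow : (d - c) * |g c| - K * (d - c) ^ 2 ≤ |f d - f c| := by
      rw [← hftc]
      have h1 : |(d - c) * g c| - |(∫ x in c..d, g x) - (d - c) * g c| ≤ |∫ x in c..d, g x| := by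
        have := abs_sub_abs_le_abs_sub ((d - c) * g c) (∫ x in c..d, g x)
        have h2 : |(d - c) * g c - ∫ x in c..d, g x| = |(∫ x in c..d, g x) - (d - c) * g c| :=
          abs_sub_comm _ _
        linarith
      rw [abs_mul, abs_of_nonneg (by linarith : (0:ℝ) ≤ d - c)] at h1
      linarith
    nlinarith [abs_nonneg (g c)]

/-- **Differential-Integral Error Order Estimation (quantitative form).**
If `f` is twice continuously differentiable on `[a, b]` with `|f''| ≤ K` there, then for
every `L ≥ 1`, with partition points `xᵢ = a + i·(b−a)/L`,
`|Σ_{i=1}^{L} |f(xᵢ) − f(x_{i−1})| − ∫_a^b |f'|| ≤ 2K·(b−a)^2/L`. -/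
theorem increment_sum_integral_error (a b : ℝ) (hab : a < b) (f : ℝ → ℝ) (K : ℝ)
    (hf : ContDiffOn ℝ 2 f (Set.Icc a b))
    (hK : ∀ x ∈ Set.Icc a b, |iteratedDerivWithin 2 f (Set.Icc a b) x| ≤ K) :
    ∀ L : ℕ, 1 ≤ L →
      abs ((∑ i ∈ Finset.Icc 1 L,
          |f (a + (i : ℝ) * ((b - a) / L)) - f (a + ((i : ℝ) - 1) * ((b - a) / L))|) -
        ∫ x in a..b, |derivWithin f (Set.Icc a b) x|) ≤
      2 * K * (b - a) ^ 2 / L := by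
  intro L hL
  have hs : UniqueDiffOn ℝ (Set.Icc a b) := uniqueDiffOn_Icc hab
  set g : ℝ → ℝ := derivWithin f (Set.Icc a b) with hg
  have hamem : a ∈ Set.Icc a b := ⟨le_refl a, hab.le⟩
  have hK0 : 0 ≤ K := le_trans (abs_nonneg _) (hK a hamem)
  have hgc : ContinuousOn g (Set.Icc a b) :=
    hf.continuousOn_derivWithin hs (by norm_num)
  have hcd1 : ContDiffOn ℝ 1 g (Set.Icc a b) := hf.derivWithin hs (by norm_num)
  have hgd : DifferentiableOn ℝ g (Set.Icc a b) := hcd1.differentiableOn (by norm_num)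
  have hg2 : ∀ z ∈ Set.Icc a b, derivWithin g (Set.Icc a b) z
      = iteratedDerivWithin 2 f (Set.Icc a b) z := by
    intro z hz
    have h2 : iteratedDerivWithin 2 f (Set.Icc a b) z
        = derivWithin (iteratedDerivWithin 1 f (Set.Icc a b)) (Set.Icc a b) z :=
      congrFun iteratedDerivWithin_succ z
    rw [h2]
    exact derivWithin_congr (fun w hw => (congrFun iteratedDerivWithin_one w).symm)
      ((congrFun iteratedDerivWithin_one z).symm)
  have hlip : ∀ x ∈ Set.Icc a b, ∀ y ∈ Set.Icc a b, |g y - g x| ≤ K * |y - x| := by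
    intro x hx y hy
    exact Convex.norm_image_sub_le_of_norm_derivWithin_le hgd
      (fun z hz => by rw [Real.norm_eq_abs, hg2 z hz]; exact hK z hz)
      (convex_Icc a b) hx hy
  have hder : ∀ x ∈ Set.Ioo a b, HasDerivAt f (g x) x := by
    intro x hx
    have h1 : HasDerivWithinAt f (g x) (Set.Icc a b) x :=
      (hf.differentiableOn (by norm_num) x (Set.Ioo_subset_Icc_self hx)).hasDerivWithinAt
    exact h1.hasDerivAt (Icc_mem_nhds hx.1 hx.2)
  have hfc : ContinuousOn f (Set.Icc a b) := hf.continuousOn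
  -- partition points
  have hLpos : (0:ℝ) < L := by exact_mod_cast hL
  set h : ℝ := (b - a) / L with hh
  have hhpos : 0 < h := div_pos (by linarith) hLpos
  set p : ℕ → ℝ := fun i => a + i * h with hp
  have hpmem : ∀ i ≤ L, p i ∈ Set.Icc a b := by
    intro i hi
    constructor
    · simp only [hp]
      nlinarith [Nat.cast_nonneg (α := ℝ) i, hhpos.le]
    · simp only [hp]
      have hcast : (i:ℝ) ≤ L := by exact_mod_cast hi
      have : (i:ℝ) * h ≤ L * h := by nlinarith
      have hLh : (L:ℝ) * h = b - a := by rw [hh]; field_simp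
      linarith
  have hstep : ∀ k : ℕ, p (k+1) - p k = h := by
    intro k; simp only [hp]; push_cast; ring
  have hmono : ∀ k : ℕ, p k ≤ p (k+1) := by
    intro k; have := hstep k; linarith
  -- per interval bounds
  have hkey : ∀ k < L, |f (p (k+1)) - f (p k)| ≤ (∫ x in p k..p (k+1), |g x|) ∧
      (∫ x in p k..p (k+1), |g x|) ≤ |f (p (k+1)) - f (p k)| + 2 * K * h ^ 2 := by
    intro k hk
    have hc : a ≤ p k := (hpmem k (le_of_lt hk)).1
    have hd : p (k+1) ≤ b := (hpmem (k+1) hk).2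
    have := per_interval_est a b f g K hK0 hgc hfc hder hlip (p k) (p (k+1))
      hc (hmono k) hd
    rwa [show p (k+1) - p k = h from hstep k] at this
  have hint : ∀ k < L, IntervalIntegrable (fun x => |g x|) MeasureTheory.volume
      (p k) (p (k+1)) := by
    intro k hk
    have hc : a ≤ p k := (hpmem k (le_of_lt hk)).1
    have hd : p (k+1) ≤ b := (hpmem (k+1) hk).2
    exact ((hgc.mono (Set.Icc_subset_Icc hc hd)).abs).intervalIntegrable_of_Icc (hmono k)
  have hsplit : (∑ k ∈ Finset.range L, ∫ x in p k..p (k+1), |g x|)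
      = ∫ x in a..b, |g x| := by
    have := intervalIntegral.sum_integral_adjacent_intervals hint
    have hp0 : p 0 = a := by simp [hp]
    have hpL : p L = b := by
      simp only [hp]
      have : (L:ℝ) * h = b - a := by rw [hh]; field_simp
      linarith
    rwa [hp0, hpL] at this
  -- reindex the sum
  have hreindex : (∑ i ∈ Finset.Icc 1 L,
      |f (a + (i : ℝ) * ((b - a) / L)) - f (a + ((i : ℝ) - 1) * ((b - a) / L))|)
      = ∑ k ∈ Finset.range L, |f (p (k+1)) - f (p k)| := by
    rw [← Finset.Ico_add_one_right_eq_Icc, Finset.sum_Ico_eq_sum_range]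
    apply Finset.sum_congr (by norm_num)
    intro k _
    congr 2
    · congr 1
      simp only [hp]; push_cast; ring
    · congr 1
      simp only [hp]; push_cast; ring
  rw [hreindex, ← hsplit]
  have hle : (∑ k ∈ Finset.range L, |f (p (k+1)) - f (p k)|)
      ≤ ∑ k ∈ Finset.range L, ∫ x in p k..p (k+1), |g x| :=
    Finset.sum_le_sum fun k hk => (hkey k (Finset.mem_range.mp hk)).1
  have hge : (∑ k ∈ Finset.range L, ∫ x in p k..p (k+1), |g x|)
      ≤ (∑ k ∈ Finset.range L, |f (p (k+1)) - f (p k)|) + L * (2 * K * h ^ 2) := by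
    calc (∑ k ∈ Finset.range L, ∫ x in p k..p (k+1), |g x|)
        ≤ ∑ k ∈ Finset.range L, (|f (p (k+1)) - f (p k)| + 2 * K * h ^ 2) :=
          Finset.sum_le_sum fun k hk => (hkey k (Finset.mem_range.mp hk)).2
      _ = (∑ k ∈ Finset.range L, |f (p (k+1)) - f (p k)|) + L * (2 * K * h ^ 2) := by
          rw [Finset.sum_add_distrib, Finset.sum_const, Finset.card_range,
            nsmul_eq_mul]
  have hbound : (L:ℝ) * (2 * K * h ^ 2) = 2 * K * (b - a) ^ 2 / L := by
    rw [hh]; field_simp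
  rw [abs_sub_comm, abs_of_nonneg (by linarith)]
  linarith
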